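/- For every k ≥ 3, the complement of the cycle C_{2k−1} is a k-vertex-critical (P_3 + P_1)-free graph on 2k − 1 vertices. -/

import Mathlib

open SimpleGraph

/-- `G` is `k`-vertex-critical: `χ(G) = k` and deleting any vertex decreases `χ`. -/
def IsKVertexCritical {V : Type*} (G : SimpleGraph V) (k : ℕ) : Prop :=
  G.chromaticNumber = k ∧ ∀ v : V, (G.induce ({v}ᶜ : Set V)).chromaticNumber < k

/-- `G` has no induced subgraph isomorphic to `H`. -/
def InducedFree {V W : Type*} (G : SimpleGraph V) (H : SimpleGraph W) : Prop :=
  ∀ s : Set V, IsEmpty (G.induce s ≃g H)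

/-- `s` is an independent set of `G`. -/
def IsIndepSet {V : Type*} (G : SimpleGraph V) (s : Set V) : Prop :=
  s.Pairwise fun a b => ¬ G.Adj a b

/-- The graph `P_2 + ℓ P_1`: an edge together with `ℓ` isolated vertices. -/
def P2lP1 (ℓ : ℕ) : SimpleGraph (Fin (ℓ + 2)) := fromEdgeSet {s(0, 1)}

/-- The graph `P_3 + P_1`: a path on three vertices plus an isolated vertex. -/
def P3P1 : SimpleGraph (Fin 4) := fromEdgeSet {s(0, 1), s(1, 2)}

/-- The paw: a triangle with a pendant vertex. -/
def paw : SimpleGraph (Fin 4) := fromEdgeSet {s(0, 1), s(0, 2), s(1, 2), s(2, 3)}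

/-- The join of two graphs: all edges between the two sides are added. -/
def joinG {α β : Type*} (G : SimpleGraph α) (H : SimpleGraph β) : SimpleGraph (α ⊕ β) where
  Adj x y :=
    match x, y with
    | Sum.inl a, Sum.inl b => G.Adj a b
    | Sum.inr a, Sum.inr b => H.Adj a b
    | Sum.inl _, Sum.inr _ => True
    | Sum.inr _, Sum.inl _ => True
  symm := ⟨by
    rintro (a | a) (b | b) h
    · exact G.adj_symm h
    · trivial
    · trivial
    · exact H.adj_symm h⟩
  loopless := ⟨by
    rintro (a | a) h
    · exact G.loopless.irrefl a h
    · exact H.loopless.irrefl a h⟩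

/-!
Colour classes of the complement `G` of `C_n` are cliques of `C_n`, i.e. single vertices or
edges, so for `n ≥ 4` every colouring uses at least `⌈n/2⌉` colours; colouring `u` by `⌊u/2⌋`
attains this, and after deleting `v` the same colouring, started at `v + 1`, needs one colour
less. In `P_3 + P_1` the isolated vertex is non-adjacent to the other three, so an induced copy
in `G` would give a vertex with three neighbours on the cycle.
-/

namespace SimpleGraph

open Finset

variable {V : Type*} {G : SimpleGraph V}

theorem card_le_two_mul_of_cliqueFree_compl [Fintype V] (hG : Gᶜ.CliqueFree 3) {c : ℕ}
    (hc : G.Colorable c) : Fintype.card V ≤ 2 * c := by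
  classical
  obtain ⟨C⟩ := hc
  have fiber_card_le_two : ∀ t : Fin c, #{u | C u = t} ≤ 2 := by
    intro t
    by_contra! hlt
    obtain ⟨a, ha, b, hb, d, hd, hab, had, hbd⟩ := two_lt_card.1 hlt
    simp only [mem_filter, mem_univ, true_and] at ha hb hd
    have compl_adj_of_eq {x y : V} (hxy : x ≠ y) (h : C x = C y) : Gᶜ.Adj x y :=
      (G.compl_adj x y).2 ⟨hxy, fun hadj => C.valid hadj h⟩
    exact hG {a, b, d} (is3Clique_triple_iff.2
      ⟨compl_adj_of_eq hab (ha.trans hb.symm), compl_adj_of_eq had (ha.trans hd.symm),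
        compl_adj_of_eq hbd (hb.trans hd.symm)⟩)
  simpa using card_le_mul_card_image_of_maps_to (f := C) (s := univ)
    (t := univ) (fun _ _ => mem_univ _) 2 (fun t _ => fiber_card_le_two t)

theorem le_chromaticNumber_of_cliqueFree_compl [Fintype V] (hG : Gᶜ.CliqueFree 3) :
    ((Fintype.card V + 1) / 2 : ℕ) ≤ G.chromaticNumber :=
  le_chromaticNumber_iff_colorable.2 fun _ hc => by
    have := card_le_two_mul_of_cliqueFree_compl hG hc
    omega

theorem inducedFree_compl_P3P1 [G.LocallyFinite] (hG : ∀ v, G.degree v ≤ 2) :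
    InducedFree Gᶜ P3P1 := by
  classical
  refine fun s => ⟨fun e => ?_⟩
  have adj_of_not_adj {i j : Fin 4} (hij : i ≠ j) (h : ¬P3P1.Adj i j) :
      G.Adj (e.symm i) (e.symm j) := by
    by_contra hG'
    exact h (e.symm.map_adj_iff.1 ((G.compl_adj _ _).2
      ⟨fun heq => hij (e.symm.injective (Subtype.ext heq)), hG'⟩))
  have val_ne {i j : Fin 4} (hij : i ≠ j) : (e.symm i : V) ≠ e.symm j :=
    fun heq => hij (e.symm.injective (Subtype.ext heq))
  have adj_three {i : Fin 4} (hi : i ≠ 3) : (e.symm i).1 ∈ G.neighborFinset (e.symm 3) :=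
    (mem_neighborFinset _ _ _).2 (adj_of_not_adj hi.symm (by fin_cases i <;> simp_all [P3P1]))
  have := two_lt_card.2 ⟨_, adj_three (i := 0) (by decide), _, adj_three (i := 1) (by decide),
    _, adj_three (i := 2) (by decide), val_ne (by decide), val_ne (by decide), val_ne (by decide)⟩
  rw [card_neighborFinset_eq_degree] at this
  exact (hG _).not_gt this

theorem induce_compl (G : SimpleGraph V) (s : Set V) : Gᶜ.induce s = (G.induce s)ᶜ := by
  ext a b
  simp [compl_adj, Subtype.ext_iff]

theorem colorable_compl_of_adj_of_eq {c : ℕ} (f : V → Fin c)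
    (hf : ∀ ⦃u w⦄, u ≠ w → f u = f w → G.Adj u w) : Gᶜ.Colorable c :=
  ⟨Coloring.mk f fun h heq => ((G.compl_adj _ _).1 h).2 (hf ((G.compl_adj _ _).1 h).1 heq)⟩

theorem cycleGraph_adj_iff_val {n : ℕ} {u v : Fin (n + 2)} :
    (cycleGraph (n + 2)).Adj u v ↔ u.val + 1 = v.val ∨ v.val + 1 = u.val ∨
      (u.val = 0 ∧ v.val = n + 1) ∨ (v.val = 0 ∧ u.val = n + 1) := by
  have := u.isLt
  have := v.isLt
  rw [cycleGraph_adj']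
  rcases lt_trichotomy u v with h | rfl | h
  · rw [Fin.coe_sub_iff_lt.2 h, Fin.sub_val_of_le h.le, Fin.lt_def] at *
    omega
  · simp only [sub_self, Fin.val_zero]
    omega
  · rw [Fin.coe_sub_iff_lt.2 h, Fin.sub_val_of_le h.le, Fin.lt_def] at *
    omega

theorem cycleGraph_cliqueFree_three {n : ℕ} (hn : 4 ≤ n) : (cycleGraph n).CliqueFree 3 := by
  obtain ⟨m, rfl⟩ : ∃ m, n = m + 2 := ⟨n - 2, by omega⟩
  intro s hs
  obtain ⟨a, b, c, hab, hac, hbc, -⟩ := is3Clique_iff.1 hs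
  rw [cycleGraph_adj_iff_val] at hab hac hbc
  omega

theorem cycleGraph_degree_le_two {n : ℕ} (v : Fin n) : (cycleGraph n).degree v ≤ 2 := by
  match n with
  | 0 => exact v.elim0
  | 1 => simp [cycleGraph_one_eq_bot]
  | n + 2 => exact cycleGraph_degree_two_le.trans_le card_le_two

theorem cycleGraph_adj_of_sub_div_two_eq {n : ℕ} [NeZero n] {u w : Fin n} (s : Fin n)
    (huw : u ≠ w) (h : (u - s).val / 2 = (w - s).val / 2) : (cycleGraph n).Adj u w := by
  rw [cycleGraph_adj', ← sub_sub_sub_cancel_right u w s, ← sub_sub_sub_cancel_right w u s]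
  have hne : (u - s).val ≠ (w - s).val := fun heq => huw (sub_left_inj.1 (Fin.ext heq))
  rcases lt_or_gt_of_ne hne with hlt | hlt <;>
  · rw [Fin.sub_val_of_le (Fin.le_def.2 hlt.le)]
    omega

theorem compl_cycleGraph_colorable (n : ℕ) [NeZero n] :
    (cycleGraph n)ᶜ.Colorable ((n + 1) / 2) :=
  colorable_compl_of_adj_of_eq (fun u => ⟨u.val / 2, by omega⟩) fun u w huw h =>
    cycleGraph_adj_of_sub_div_two_eq 0 huw (by simpa [Fin.ext_iff] using h)

theorem compl_cycleGraph_induce_compl_singleton_colorable {n : ℕ} [NeZero n] (v : Fin n) :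
    ((cycleGraph n)ᶜ.induce {v}ᶜ).Colorable (n / 2) := by
  obtain ⟨m, rfl⟩ : ∃ m, n = m + 1 := ⟨n - 1, by have := NeZero.ne n; omega⟩
  have lt_of_ne (u : Fin (m + 1)) (hu : u ≠ v) : (u - (v + 1)).val < m := by
    have hne : u - (v + 1) ≠ v - (v + 1) := fun h => hu (sub_left_inj.1 h)
    rw [sub_add_cancel_left, Ne, Fin.ext_iff, Fin.coe_neg_one] at hne
    have := (u - (v + 1)).isLt
    omega
  rw [induce_compl]
  exact colorable_compl_of_adj_of_eq (fun u => ⟨(u.1 - (v + 1)).val / 2, by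
    have := lt_of_ne u.1 u.2; omega⟩) fun u w huw h =>
    cycleGraph_adj_of_sub_div_two_eq (v + 1) (Subtype.coe_injective.ne huw)
      (Fin.ext_iff.1 h)

end SimpleGraph

theorem compl_odd_cycle_vertex_critical (k : ℕ) (hk : 3 ≤ k) :
    IsKVertexCritical (cycleGraph (2 * k - 1))ᶜ k ∧
      InducedFree (cycleGraph (2 * k - 1))ᶜ P3P1 ∧
      Fintype.card (Fin (2 * k - 1)) = 2 * k - 1 := by
  have : NeZero (2 * k - 1) := ⟨by omega⟩
  have half_card : (2 * k - 1 + 1) / 2 = k := by omega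
  have cliqueFree : (cycleGraph (2 * k - 1))ᶜᶜ.CliqueFree 3 := by
    rw [compl_compl]
    exact cycleGraph_cliqueFree_three (by omega)
  refine ⟨⟨le_antisymm ?_ ?_, fun v => ?_⟩, inducedFree_compl_P3P1 cycleGraph_degree_le_two,
    Fintype.card_fin _⟩
  · simpa [half_card] using (compl_cycleGraph_colorable (2 * k - 1)).chromaticNumber_le
  · simpa [half_card] using le_chromaticNumber_of_cliqueFree_compl cliqueFree
  · calc _ ≤ (((2 * k - 1) / 2 : ℕ) : ℕ∞) :=
          (compl_cycleGraph_induce_compl_singleton_colorable v).chromaticNumber_le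
      _ < (k : ℕ∞) := by exact_mod_cast (by omega : (2 * k - 1) / 2 < k)
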